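/- arXiv:1205.0288 — 2 statements merged into one kernel-verified Lean document; each statement's English description precedes it below -/
import Mathlib

section
/- For any real number p with 1 ≤ p ≤ 2, any finite index set I, positive weights ρ_i > 0, and vectors w_i in Hilbert spaces, the squared weighted group p-norm admits the variational representation (Σ_{i∈I} ρ_i^p ‖w_i‖^p)^{2/p} = inf { Σ_{i∈I} ρ_i^2 ‖w_i‖^2 / θ_i : θ ∈ Δ_ν }, where ν = p/(2-p) and Δ_ν = {θ ∈ [0,1]^I : ‖θ‖_ν ≤ 1}, with the conventions 0/0 = 0 and u/0 = ∞ for u > 0. -/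
/-!
Write `bᵢ = ρᵢ ‖wᵢ‖`. For `p < 2`, Hölder's inequality with exponents `1` and `ν = p/(2-p)`
(note `1 + 1/ν = 2/p`) applied to `bᵢ^p = (bᵢ²/θᵢ · θᵢ)^(p/2)` gives
`Σ bᵢ^p ≤ (Σ bᵢ²/θᵢ)^(p/2) · (Σ θᵢ^ν)^((2-p)/2)`, which is the lower bound on `Δ_ν`;
for `p = 2` the lower bound is just `θᵢ ≤ 1`. Equality holds at
`θᵢ = (bᵢ^p / Σ bⱼ^p)^((2-p)/p)`, whose `ν`-th powers sum to one.
-/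

open scoped ENNReal

section GroupNorm

variable {I : Type*} [Fintype I] {p : ℝ} {b θ : I → ℝ}

/-- `Δ_ν` with `ν = p/(2-p)`. -/
def weightSimplex (I : Type*) [Fintype I] (p : ℝ) : Set (I → ℝ) :=
  {θ | (∀ i, 0 ≤ θ i ∧ θ i ≤ 1) ∧ (p < 2 → ∑ i, θ i ^ (p / (2 - p)) ≤ 1)}

/-- If all `bᵢ = 0`, then `0 / 0 = 0` makes this `0` (or `0 ^ 0 = 1` when `p = 2`), which is
still a minimiser. -/
noncomputable def optimalWeight (p : ℝ) (b : I → ℝ) (i : I) : ℝ :=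
  (b i ^ p / ∑ j, b j ^ p) ^ ((2 - p) / p)

theorem sum_rpow_le_sum_sq_div_rpow_mul (hp0 : 0 < p) (hp2 : p < 2) (hb : ∀ i, 0 ≤ b i)
    (hθ : ∀ i, 0 ≤ θ i) (hzero : ∀ i, θ i = 0 → b i = 0) :
    ∑ i, b i ^ p ≤
      (∑ i, b i ^ 2 / θ i) ^ (p / 2) * (∑ i, θ i ^ (p / (2 - p))) ^ ((2 - p) / 2) := by
  have h2p : 0 < 2 - p := by linarith
  have hholder : (1 : ℝ).HolderTriple (p / (2 - p)) (p / 2) :=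
    ⟨by field_simp; ring, one_pos, by positivity⟩
  have hprod : ∀ i, (b i ^ 2 / θ i * θ i) ^ (p / 2) = b i ^ p := fun i => by
    rcases (hθ i).eq_or_lt with h | h
    · simp [← h, hzero i h.symm, Real.zero_rpow hp0.ne', Real.zero_rpow (half_pos hp0).ne']
    · rw [div_mul_cancel₀ _ h.ne', ← Real.rpow_natCast_mul (hb i)]
      norm_num [mul_div_cancel₀]
  have key := Real.Lr_rpow_le_Lp_mul_Lq_of_nonneg Finset.univ hholder
    (f := fun i => b i ^ 2 / θ i) (g := θ) (fun i _ => div_nonneg (sq_nonneg _) (hθ i))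
    (fun i _ => hθ i)
  have hexp : p / 2 / (p / (2 - p)) = (2 - p) / 2 := by field_simp
  simpa only [hprod, Real.rpow_one, div_one, hexp] using key

theorem rpow_sum_rpow_le_sum_sq_div (hp0 : 0 < p) (hp2 : p < 2) (hb : ∀ i, 0 ≤ b i)
    (hθ : ∀ i, 0 ≤ θ i) (hzero : ∀ i, θ i = 0 → b i = 0)
    (hθν : ∑ i, θ i ^ (p / (2 - p)) ≤ 1) :
    (∑ i, b i ^ p) ^ (2 / p) ≤ ∑ i, b i ^ 2 / θ i := by
  have hT : 0 ≤ ∑ i, b i ^ 2 / θ i := Finset.sum_nonneg fun i _ => div_nonneg (sq_nonneg _) (hθ i)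
  have hsum : ∑ i, b i ^ p ≤ (∑ i, b i ^ 2 / θ i) ^ (p / 2) :=
    calc ∑ i, b i ^ p
        ≤ (∑ i, b i ^ 2 / θ i) ^ (p / 2) * (∑ i, θ i ^ (p / (2 - p))) ^ ((2 - p) / 2) :=
          sum_rpow_le_sum_sq_div_rpow_mul hp0 hp2 hb hθ hzero
      _ ≤ (∑ i, b i ^ 2 / θ i) ^ (p / 2) * 1 := by
          gcongr
          exact Real.rpow_le_one (Finset.sum_nonneg fun i _ => Real.rpow_nonneg (hθ i) _) hθν
            (by linarith)
      _ = (∑ i, b i ^ 2 / θ i) ^ (p / 2) := mul_one _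
  calc (∑ i, b i ^ p) ^ (2 / p)
      ≤ ((∑ i, b i ^ 2 / θ i) ^ (p / 2)) ^ (p / 2)⁻¹ := by
        rw [inv_div]
        exact Real.rpow_le_rpow (Finset.sum_nonneg fun i _ => Real.rpow_nonneg (hb i) _) hsum
          (by positivity)
    _ = ∑ i, b i ^ 2 / θ i := Real.rpow_rpow_inv hT (by positivity)

theorem ENNReal.ofReal_div_ofReal_eq_ofReal_div {a t : ℝ} (ht : 0 ≤ t) (h : t = 0 → a = 0) :
    ENNReal.ofReal a / ENNReal.ofReal t = ENNReal.ofReal (a / t) := by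
  rcases ht.eq_or_lt with ht | ht
  · simp [← ht, h ht.symm]
  · exact (ENNReal.ofReal_div_of_pos ht).symm

theorem ofReal_rpow_sum_rpow_le_sum_div (hp0 : 0 < p) (hp2 : p ≤ 2) (hb : ∀ i, 0 ≤ b i)
    (hθ : θ ∈ weightSimplex I p) :
    ENNReal.ofReal ((∑ i, b i ^ p) ^ (2 / p)) ≤
      ∑ i, ENNReal.ofReal (b i ^ 2) / ENNReal.ofReal (θ i) := by
  obtain ⟨hθ01, hθν⟩ := hθ
  rcases hp2.lt_or_eq with hp2 | rfl
  · by_cases hzero : ∀ i, θ i = 0 → b i = 0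
    · have hterm : ∀ i, ENNReal.ofReal (b i ^ 2) / ENNReal.ofReal (θ i) =
          ENNReal.ofReal (b i ^ 2 / θ i) := fun i =>
        ENNReal.ofReal_div_ofReal_eq_ofReal_div (hθ01 i).1 fun h => by rw [hzero i h]; ring
      rw [Finset.sum_congr rfl fun i _ => hterm i, ← ENNReal.ofReal_sum_of_nonneg fun i _ => div_nonneg (sq_nonneg _) (hθ01 i).1]
      exact ENNReal.ofReal_le_ofReal <|
        rpow_sum_rpow_le_sum_sq_div hp0 hp2 hb (fun i => (hθ01 i).1) hzero (hθν hp2)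
    · push Not at hzero
      obtain ⟨i, hθi, hbi⟩ := hzero
      refine le_top.trans_eq (ENNReal.sum_eq_top.2 ⟨i, Finset.mem_univ i, ?_⟩).symm
      rw [hθi, ENNReal.ofReal_zero,
        ENNReal.div_zero (ENNReal.ofReal_pos.2 (pow_pos ((hb i).lt_of_ne' hbi) 2)).ne']
  · rw [div_self two_ne_zero, Real.rpow_one,
      ENNReal.ofReal_sum_of_nonneg fun i _ => Real.rpow_nonneg (hb i) _]
    gcongr with i
    simpa [Real.rpow_two] using
      ENNReal.div_le_div_left (ENNReal.ofReal_le_one.2 (hθ01 i).2) (ENNReal.ofReal (b i ^ 2))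

theorem optimalWeight_mem (hp0 : 0 < p) (hp2 : p ≤ 2) (hb : ∀ i, 0 ≤ b i) :
    optimalWeight p b ∈ weightSimplex I p := by
  have hS : 0 ≤ ∑ j, b j ^ p := Finset.sum_nonneg fun j _ => Real.rpow_nonneg (hb j) _
  have hratio : ∀ i, 0 ≤ b i ^ p / ∑ j, b j ^ p := fun i =>
    div_nonneg (Real.rpow_nonneg (hb i) _) hS
  refine ⟨fun i => ⟨Real.rpow_nonneg (hratio i) _, Real.rpow_le_one (hratio i) ?_ ?_⟩,
    fun hp2 => ?_⟩
  · exact div_le_one_of_le₀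
      (Finset.single_le_sum (fun j _ => Real.rpow_nonneg (hb j) _) (Finset.mem_univ i)) hS
  · exact div_nonneg (by linarith) hp0.le
  · have hexp : (2 - p) / p * (p / (2 - p)) = 1 := by
      field_simp [(by linarith : (2 - p) ≠ 0)]
    simp only [optimalWeight, ← Real.rpow_mul (hratio _), hexp, Real.rpow_one,
      ← Finset.sum_div]
    exact div_self_le_one _

theorem ofReal_sq_div_optimalWeight (hp : p ≠ 0) (hb : ∀ i, 0 ≤ b i) (i : I) :
    ENNReal.ofReal (b i ^ 2) / ENNReal.ofReal (optimalWeight p b i) =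
      ENNReal.ofReal (b i ^ p * (∑ j, b j ^ p) ^ ((2 - p) / p)) := by
  rcases (hb i).eq_or_lt with hbi | hbi
  · simp [← hbi, Real.zero_rpow hp]
  have hS : 0 < ∑ j, b j ^ p :=
    (Real.rpow_pos_of_pos hbi p).trans_le
      (Finset.single_le_sum (fun j _ => Real.rpow_nonneg (hb j) _) (Finset.mem_univ i))
  have hθ : 0 < optimalWeight p b i :=
    Real.rpow_pos_of_pos (div_pos (Real.rpow_pos_of_pos hbi p) hS) _
  rw [← ENNReal.ofReal_div_of_pos hθ, optimalWeight,
    Real.div_rpow (Real.rpow_nonneg (hb i) _) hS.le, ← Real.rpow_mul (hb i),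
    mul_div_cancel₀ _ hp, div_div_eq_mul_div, ← Real.rpow_natCast, mul_div_right_comm,
    ← Real.rpow_sub hbi]
  norm_num

theorem sum_ofReal_sq_div_optimalWeight (hp : p ≠ 0) (hb : ∀ i, 0 ≤ b i) :
    ∑ i, ENNReal.ofReal (b i ^ 2) / ENNReal.ofReal (optimalWeight p b i) =
      ENNReal.ofReal ((∑ i, b i ^ p) ^ (2 / p)) := by
  have hS : 0 ≤ ∑ j, b j ^ p := Finset.sum_nonneg fun j _ => Real.rpow_nonneg (hb j) _
  have hexp : 2 / p = 1 + (2 - p) / p := by field_simp; ring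
  rw [Finset.sum_congr rfl fun i _ => ofReal_sq_div_optimalWeight hp hb i,
    ← ENNReal.ofReal_sum_of_nonneg fun i _ =>
      mul_nonneg (Real.rpow_nonneg (hb i) _) (Real.rpow_nonneg hS _),
    ← Finset.sum_mul, hexp, Real.rpow_add' hS (by rw [← hexp]; exact div_ne_zero two_ne_zero hp),
    Real.rpow_one]

theorem ofReal_rpow_sum_rpow_eq_iInf (hp0 : 0 < p) (hp2 : p ≤ 2) (hb : ∀ i, 0 ≤ b i) :
    ENNReal.ofReal ((∑ i, b i ^ p) ^ (2 / p)) =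
      ⨅ θ ∈ weightSimplex I p, ∑ i, ENNReal.ofReal (b i ^ 2) / ENNReal.ofReal (θ i) :=
  le_antisymm (le_iInf₂ fun _ hθ => ofReal_rpow_sum_rpow_le_sum_div hp0 hp2 hb hθ)
    ((iInf₂_le _ (optimalWeight_mem hp0 hp2 hb)).trans_eq
      (sum_ofReal_sq_div_optimalWeight hp0.ne' hb))

end GroupNorm

theorem group_p_norm_variational_general
    {I : Type*} [Fintype I] {W : I → Type*}
    [∀ i, NormedAddCommGroup (W i)]
    (p : ℝ) (hp1 : 1 ≤ p) (hp2 : p ≤ 2)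
    (ρ : I → ℝ) (hρ : ∀ i, 0 < ρ i) (w : ∀ i, W i) :
    ENNReal.ofReal ((∑ i, ρ i ^ p * ‖w i‖ ^ p) ^ (2 / p)) =
      ⨅ θ ∈ {θ : I → ℝ | (∀ i, 0 ≤ θ i ∧ θ i ≤ 1) ∧
          (p < 2 → ∑ i, θ i ^ (p / (2 - p)) ≤ 1)},
        ∑ i, ENNReal.ofReal (ρ i ^ 2 * ‖w i‖ ^ 2) / ENNReal.ofReal (θ i) := by
  have hb : ∀ i, 0 ≤ ρ i * ‖w i‖ := fun i => mul_nonneg (hρ i).le (norm_nonneg _)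
  have hpow : ∀ i, ρ i ^ p * ‖w i‖ ^ p = (ρ i * ‖w i‖) ^ p := fun i =>
    (Real.mul_rpow (hρ i).le (norm_nonneg _)).symm
  simp only [hpow, ← mul_pow]
  exact ofReal_rpow_sum_rpow_eq_iInf (by linarith) hp2 hb

/-- Variational representation of the squared weighted group `p`-norm:
`(Σ ρᵢ^p ‖wᵢ‖^p)^(2/p) = inf { Σ ρᵢ² ‖wᵢ‖² / θᵢ : θ ∈ Δ_ν }` with `ν = p/(2-p)`,
conventions `0/0 = 0`, `u/0 = ∞` (realized by `ℝ≥0∞` division), and when `p = 2`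
the `ℓ^ν`-constraint is the sup-norm constraint (already implied by `θ ∈ [0,1]^I`). -/
theorem group_p_norm_variational
    {I : Type*} [Fintype I] {W : I → Type*}
    [∀ i, NormedAddCommGroup (W i)] [∀ i, InnerProductSpace ℝ (W i)]
    (p : ℝ) (hp1 : 1 ≤ p) (hp2 : p ≤ 2)
    (ρ : I → ℝ) (hρ : ∀ i, 0 < ρ i) (w : ∀ i, W i) :
    ENNReal.ofReal ((∑ i, ρ i ^ p * ‖w i‖ ^ p) ^ (2 / p)) =
      ⨅ θ ∈ {θ : I → ℝ | (∀ i, 0 ≤ θ i ∧ θ i ≤ 1) ∧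
          (p < 2 → ∑ i, θ i ^ (p / (2 - p)) ≤ 1)},
        ∑ i, ENNReal.ofReal (ρ i ^ 2 * ‖w i‖ ^ 2) / ENNReal.ofReal (θ i) :=
  group_p_norm_variational_general p hp1 hp2 ρ hρ w
end

section
/- Let Ψ : A → ℝ be Legendre and α-strongly convex with respect to a norm ‖·‖ for some α > 0, let K be a closed convex set with K ∩ A nonempty, let θ₁ ∈ K ∩ A°, θ ∈ K ∩ A, g ∈ ℝ^d, and set θ₂ = argmin_{θ' ∈ K ∩ A} { ⟨g, θ'⟩ + D_Ψ(θ', θ₁) }. Then ⟨g, θ₁ - θ⟩ ≤ D_Ψ(θ, θ₁) - D_Ψ(θ, θ₂) + ‖g‖_*² / (2α), where ‖·‖_* is the dual norm. -/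
/-!
First-order optimality of `θ₂` on `K` (the constraint `A` is inactive near `θ₂ ∈ A°`) gives
`⟪g + ∇Ψ θ₂ - ∇Ψ θ₁, θ - θ₂⟫ ≥ 0`, which by the three-point identity for Bregman divergences reads
`⟪g, θ₂ - θ⟫ ≤ D θ θ₁ - D θ θ₂ - D θ₂ θ₁`. The remaining term is bounded by the dual norm and Young:
`⟪g, θ₁ - θ₂⟫ ≤ ‖g‖_* ‖θ₁ - θ₂‖ ≤ ‖g‖_*² / (2α) + α/2 ‖θ₁ - θ₂‖²`, and strong convexity absorbs the
last summand into `D θ₂ θ₁`. The supremum defining `‖g‖_*` is finite because `N` is equivalent to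
the Euclidean norm, as all norms on `ℝ^d` are.
-/

/-- A copy of `E` on which the norm-like function `N` is installed as the norm. -/
def WithNormLike {E : Type*} (_N : E → ℝ) : Type _ := E

theorem normLike_nonneg {E : Type*} [AddCommGroup E] [Module ℝ E] (N : E → ℝ)
    (htri : ∀ x y, N (x + y) ≤ N x + N y)
    (hhom : ∀ (c : ℝ) x, N (c • x) = |c| * N x) (x : E) : 0 ≤ N x := by
  have h0 : N 0 = 0 := by simpa using hhom 0 0
  have hneg : N (-x) = N x := by simpa using hhom (-1) x
  linarith [htri x (-x), add_neg_cancel x ▸ h0]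

theorem exists_norm_le_mul_of_normLike {E : Type*} [NormedAddCommGroup E] [NormedSpace ℝ E]
    [FiniteDimensional ℝ E] (N : E → ℝ)
    (htri : ∀ x y, N (x + y) ≤ N x + N y) (hhom : ∀ (c : ℝ) x, N (c • x) = |c| * N x)
    (hdef : ∀ x, N x = 0 → x = 0) :
    ∃ C > 0, ∀ x : E, ‖x‖ ≤ C * N x := by
  have h0 : N 0 = 0 := by simpa using hhom 0 0
  have hneg (x : E) : N (-x) = N x := by simpa using hhom (-1) x
  let _ : AddCommGroup (WithNormLike N) := inferInstanceAs (AddCommGroup E)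
  let _ : Module ℝ (WithNormLike N) := inferInstanceAs (Module ℝ E)
  let _ : NormedAddCommGroup (WithNormLike N) := AddGroupNorm.toNormedAddCommGroup
    { toFun := N
      map_zero' := h0
      add_le' := htri
      neg' := hneg
      eq_zero_of_map_eq_zero' := hdef }
  let _ : NormedSpace ℝ (WithNormLike N) := ⟨fun c x => (hhom c x).le⟩
  have : FiniteDimensional ℝ (WithNormLike N) := inferInstanceAs (FiniteDimensional ℝ E)
  let toE : WithNormLike N →ₗ[ℝ] E := LinearMap.id
  exact SemilinearMapClass.bound_of_continuous toE toE.continuous_of_finiteDimensional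

section DualNorm

variable {E : Type*} [NormedAddCommGroup E] [InnerProductSpace ℝ E] (N : E → ℝ)

theorem bddAbove_inner_of_norm_le_mul {C : ℝ} (hC : 0 < C) (hN : ∀ x, ‖x‖ ≤ C * N x) (g : E) :
    BddAbove {r : ℝ | ∃ y, N y ≤ 1 ∧ r = (inner ℝ g y : ℝ)} := by
  refine ⟨‖g‖ * C, ?_⟩
  rintro r ⟨y, hy, rfl⟩
  calc (inner ℝ g y : ℝ) ≤ ‖g‖ * ‖y‖ := real_inner_le_norm g y
    _ ≤ ‖g‖ * (C * N y) := by gcongr; exact hN y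
    _ ≤ ‖g‖ * C := by rw [← mul_assoc]; exact mul_le_of_le_one_right (by positivity) hy

theorem real_inner_le_sSup_mul (htri : ∀ x y, N (x + y) ≤ N x + N y)
    (hhom : ∀ (c : ℝ) x, N (c • x) = |c| * N x) (hdef : ∀ x, N x = 0 → x = 0) {g : E}
    (hbdd : BddAbove {r : ℝ | ∃ y, N y ≤ 1 ∧ r = (inner ℝ g y : ℝ)}) (w : E) :
    (inner ℝ g w : ℝ) ≤ sSup {r : ℝ | ∃ y, N y ≤ 1 ∧ r = (inner ℝ g y : ℝ)} * N w := by
  rcases (normLike_nonneg N htri hhom w).lt_or_eq with hpos | hzero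
  · have hunit : N ((N w)⁻¹ • w) ≤ 1 := by
      rw [hhom, abs_of_pos (inv_pos.2 hpos), inv_mul_cancel₀ hpos.ne']
    have := le_csSup hbdd ⟨_, hunit, rfl⟩
    rw [real_inner_smul_right, inv_mul_le_iff₀ hpos] at this
    linarith
  · rw [← hzero, mul_zero, hdef w hzero.symm, inner_zero_right]

end DualNorm

theorem mul_le_sq_div_add_mul_sq {a b α : ℝ} (hα : 0 < α) :
    a * b ≤ a ^ 2 / (2 * α) + α / 2 * b ^ 2 := by
  have hsq : 0 ≤ (a - α * b) ^ 2 / (2 * α) := by positivity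
  have hexpand : (a - α * b) ^ 2 / (2 * α) = a ^ 2 / (2 * α) + α / 2 * b ^ 2 - a * b := by
    field_simp; ring
  linarith

section Bregman

variable {E : Type*} [NormedAddCommGroup E] [InnerProductSpace ℝ E]

def bregmanDiv (Ψ : E → ℝ) (Ψ' : E → E) (a b : E) : ℝ :=
  Ψ a - Ψ b - (inner ℝ (Ψ' b) (a - b) : ℝ)

theorem bregmanDiv_sub_bregmanDiv_sub_bregmanDiv (Ψ : E → ℝ) (Ψ' : E → E) (a b c : E) :
    bregmanDiv Ψ Ψ' c a - bregmanDiv Ψ Ψ' c b - bregmanDiv Ψ Ψ' b a =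
      (inner ℝ (Ψ' b - Ψ' a) (c - b) : ℝ) := by
  have hsplit : c - a = (c - b) + (b - a) := by abel
  simp only [bregmanDiv, hsplit, inner_add_right, inner_sub_left]
  ring

theorem real_inner_gradient_nonneg_of_isLocalMinOn [CompleteSpace E] {f : E → ℝ} {f' x y : E}
    {s : Set E} (hf : HasGradientAt f f' x) (hmin : IsLocalMinOn f s x)
    (hseg : segment ℝ x y ⊆ s) : 0 ≤ (inner ℝ f' (y - x) : ℝ) := by
  simpa using hmin.hasFDerivWithinAt_nonneg (hasGradientAt_iff_hasFDerivAt.1 hf).hasFDerivWithinAt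
    (sub_mem_posTangentConeAt_of_segment_subset hseg)

theorem hasGradientAt_inner_add_bregmanDiv [CompleteSpace E] {Ψ : E → ℝ} {Ψ' : E → E}
    {x : E} (hΨ : HasGradientAt Ψ (Ψ' x) x) (g b : E) :
    HasGradientAt (fun y => (inner ℝ g y : ℝ) + bregmanDiv Ψ Ψ' y b) (g + (Ψ' x - Ψ' b)) x := by
  have hlin (v : E) : HasFDerivAt (fun y => (inner ℝ v y : ℝ)) (innerSL ℝ v) x :=
    (innerSL ℝ v).hasFDerivAt
  rw [hasGradientAt_iff_hasFDerivAt] at hΨ ⊢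
  have := (hlin g).add ((hΨ.sub_const (Ψ b)).sub ((hlin (Ψ' b)).sub_const (inner ℝ (Ψ' b) b)))
  refine (this.congr_fderiv ?_).congr_of_eventuallyEq (Filter.Eventually.of_forall fun y => ?_)
  · ext v
    simp only [add_apply, sub_apply, innerSL_apply_apply,
      InnerProductSpace.toDual_apply_apply, inner_add_left, inner_sub_left]
  · simp only [bregmanDiv, inner_sub_right, Pi.add_apply, Pi.sub_apply]

end Bregman

theorem mirror_descent_step_lemma_general
    {d : ℕ} (A K : Set (EuclideanSpace ℝ (Fin d)))
    (hK : Convex ℝ K)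
    (Ψ : EuclideanSpace ℝ (Fin d) → ℝ)
    (Ψ' : EuclideanSpace ℝ (Fin d) → EuclideanSpace ℝ (Fin d))
    (hdiff : ∀ x ∈ interior A, HasGradientAt Ψ (Ψ' x) x)
    (N : EuclideanSpace ℝ (Fin d) → ℝ)
    (hNtri : ∀ x y, N (x + y) ≤ N x + N y)
    (hNhom : ∀ (c : ℝ) x, N (c • x) = |c| * N x)
    (hNdef : ∀ x, N x = 0 → x = 0)
    (Ndual : EuclideanSpace ℝ (Fin d) → ℝ)
    (hNdual : ∀ g, Ndual g = sSup {r : ℝ | ∃ y, N y ≤ 1 ∧ r = (inner ℝ g y : ℝ)})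
    (α : ℝ) (hα : 0 < α)
    (hstrong : ∀ θ ∈ interior A, ∀ θ' ∈ A,
      (inner ℝ (Ψ' θ) (θ' - θ) : ℝ) + α / 2 * (N (θ' - θ)) ^ 2 ≤ Ψ θ' - Ψ θ)
    (D : EuclideanSpace ℝ (Fin d) → EuclideanSpace ℝ (Fin d) → ℝ)
    (hD : ∀ a b, D a b = Ψ a - Ψ b - (inner ℝ (Ψ' b) (a - b) : ℝ))
    (θ₁ θ θ₂ g : EuclideanSpace ℝ (Fin d))
    (hθ₁ : θ₁ ∈ K ∩ interior A) (hθ : θ ∈ K ∩ A)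
    (hθ₂mem : θ₂ ∈ K ∩ A) (hθ₂int : θ₂ ∈ interior A)
    (hθ₂min : ∀ θ' ∈ K ∩ A,
      (inner ℝ g θ₂ : ℝ) + D θ₂ θ₁ ≤ (inner ℝ g θ' : ℝ) + D θ' θ₁) :
    (inner ℝ g (θ₁ - θ) : ℝ) ≤ D θ θ₁ - D θ θ₂ + (Ndual g) ^ 2 / (2 * α) := by
  obtain rfl : D = bregmanDiv Ψ Ψ' := funext₂ hD
  have hlocmin : IsLocalMinOn (fun y => (inner ℝ g y : ℝ) + bregmanDiv Ψ Ψ' y θ₁) K θ₂ := by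
    filter_upwards [inter_mem_nhdsWithin K (isOpen_interior.mem_nhds hθ₂int)] with y hy
    exact hθ₂min y ⟨hy.1, interior_subset hy.2⟩
  have hopt : 0 ≤ (inner ℝ (g + (Ψ' θ₂ - Ψ' θ₁)) (θ - θ₂) : ℝ) :=
    real_inner_gradient_nonneg_of_isLocalMinOn
      (hasGradientAt_inner_add_bregmanDiv (hdiff θ₂ hθ₂int) g θ₁) hlocmin
      (hK.segment_subset hθ₂mem.1 hθ.1)
  have hthree := bregmanDiv_sub_bregmanDiv_sub_bregmanDiv Ψ Ψ' θ₁ θ₂ θ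
  have hdist : α / 2 * N (θ₂ - θ₁) ^ 2 ≤ bregmanDiv Ψ Ψ' θ₂ θ₁ := by
    have hstrong₁ := hstrong θ₁ hθ₁.2 θ₂ hθ₂mem.2
    rw [bregmanDiv]
    linarith
  obtain ⟨C, hC, hCN⟩ := exists_norm_le_mul_of_normLike N hNtri hNhom hNdef
  have hdual : (inner ℝ g (θ₁ - θ₂) : ℝ) ≤ Ndual g * N (θ₂ - θ₁) := by
    have hNswap : N (θ₂ - θ₁) = N (θ₁ - θ₂) := by simpa using hNhom (-1) (θ₁ - θ₂)
    rw [hNdual, hNswap]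
    exact real_inner_le_sSup_mul N hNtri hNhom hNdef (bddAbove_inner_of_norm_le_mul N hC hCN g) _
  have hyoung := mul_le_sq_div_add_mul_sq (a := Ndual g) (b := N (θ₂ - θ₁)) hα
  have hsplit : θ₁ - θ = (θ₁ - θ₂) - (θ - θ₂) := by abel
  rw [inner_add_left] at hopt
  rw [hsplit, inner_sub_right]
  linarith

/-- Per-step mirror descent lemma (Lemma 2.1 of Nemirovski et al.): with `Ψ`
Legendre and `α`-strongly convex w.r.t. a norm `N` (dual norm `Ndual`), `K` closed
convex meeting `A`, `θ₁ ∈ K ∩ A°`, `θ ∈ K ∩ A`, `g ∈ ℝ^d`, and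
`θ₂ = argmin_{θ' ∈ K ∩ A} { ⟨g, θ'⟩ + D_Ψ(θ', θ₁) }`, one has
`⟨g, θ₁ - θ⟩ ≤ D_Ψ(θ, θ₁) - D_Ψ(θ, θ₂) + Ndual(g)² / (2α)`. -/
theorem mirror_descent_step_lemma
    {d : ℕ} (A K : Set (EuclideanSpace ℝ (Fin d)))
    (hK : Convex ℝ K) (hKc : IsClosed K) (hKA : (K ∩ A).Nonempty)
    (Ψ : EuclideanSpace ℝ (Fin d) → ℝ)
    (Ψ' : EuclideanSpace ℝ (Fin d) → EuclideanSpace ℝ (Fin d))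
    (hdiff : ∀ x ∈ interior A, HasGradientAt Ψ (Ψ' x) x)
    (N : EuclideanSpace ℝ (Fin d) → ℝ)
    (hNtri : ∀ x y, N (x + y) ≤ N x + N y)
    (hNhom : ∀ (c : ℝ) x, N (c • x) = |c| * N x)
    (hNdef : ∀ x, N x = 0 → x = 0)
    (Ndual : EuclideanSpace ℝ (Fin d) → ℝ)
    (hNdual : ∀ g, Ndual g = sSup {r : ℝ | ∃ y, N y ≤ 1 ∧ r = (inner ℝ g y : ℝ)})
    (α : ℝ) (hα : 0 < α)
    (hstrong : ∀ θ ∈ interior A, ∀ θ' ∈ A,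
      (inner ℝ (Ψ' θ) (θ' - θ) : ℝ) + α / 2 * (N (θ' - θ)) ^ 2 ≤ Ψ θ' - Ψ θ)
    (D : EuclideanSpace ℝ (Fin d) → EuclideanSpace ℝ (Fin d) → ℝ)
    (hD : ∀ a b, D a b = Ψ a - Ψ b - (inner ℝ (Ψ' b) (a - b) : ℝ))
    (θ₁ θ θ₂ g : EuclideanSpace ℝ (Fin d))
    (hθ₁ : θ₁ ∈ K ∩ interior A) (hθ : θ ∈ K ∩ A)
    (hθ₂mem : θ₂ ∈ K ∩ A) (hθ₂int : θ₂ ∈ interior A)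
    (hθ₂min : ∀ θ' ∈ K ∩ A,
      (inner ℝ g θ₂ : ℝ) + D θ₂ θ₁ ≤ (inner ℝ g θ' : ℝ) + D θ' θ₁) :
    (inner ℝ g (θ₁ - θ) : ℝ) ≤ D θ θ₁ - D θ θ₂ + (Ndual g) ^ 2 / (2 * α) :=
  mirror_descent_step_lemma_general A K hK Ψ Ψ' hdiff N hNtri hNhom hNdef Ndual hNdual α hα hstrong
    D hD θ₁ θ θ₂ g hθ₁ hθ hθ₂mem hθ₂int hθ₂min
end
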